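/- Let $E$ be the set of even pairs in $V = (\mathbb{Z}/2\mathbb{Z})^g \times (\mathbb{Z}/2\mathbb{Z})^g$, i.e. pairs $b = (b_1,b_2)$ with $b_1 \cdot b_2 = 0$. For each even pair $a$, define the vector $v_a \in \mathbb{Q}^E$ by $(v_a)_b = (-1)^{\langle a, b\rangle}$ where $\langle (a_1,a_2),(b_1,b_2)\rangle = a_1\cdot b_2 + a_2\cdot b_1$. Then the family $(v_a)_{a \in E}$ is linearly independent over $\mathbb{Q}$, hence forms a basis of $\mathbb{Q}^E$. -/

import Mathlib

open Finset

def dot {g : ℕ} (a b : Fin g → ZMod 2) : ZMod 2 := ∑ i, a i * b i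

def sgn (x : ZMod 2) : ℚ := (-1 : ℚ) ^ x.val

def pair {g : ℕ} (v w : (Fin g → ZMod 2) × (Fin g → ZMod 2)) : ZMod 2 :=
  dot v.1 w.2 + dot v.2 w.1

/-- The type of even pairs in `(ℤ/2ℤ)^g × (ℤ/2ℤ)^g`. -/
def EvenPair (g : ℕ) : Type :=
  { p : (Fin g → ZMod 2) × (Fin g → ZMod 2) // dot p.1 p.2 = 0 }

instance (g : ℕ) : Fintype (EvenPair g) := by unfold EvenPair; infer_instance
instance (g : ℕ) : DecidableEq (EvenPair g) := by unfold EvenPair; infer_instance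

/-!
Let `M = ((-1)^⟨a,b⟩)_{a,b ∈ E}`. Then `M² = 2^(2g-1) I + 2^(g-1) M`, so `M (M - 2^(g-1) I)` is a
nonzero multiple of `I` and `M` is invertible. To compute `(M²)_{a,a'} = ∑_{b ∈ E} (-1)^⟨a+a',b⟩`,
write the indicator of `E` in `V` as `(1 + (-1)^(b₁·b₂)) / 2`. Summing `(-1)^⟨c,b⟩` over `V` gives
`4^g` or `0` according as `c = 0` or not (orthogonality of characters); summing
`(-1)^(b₁·b₂ + ⟨c,b⟩)` gives `(-1)^(c₁·c₂) 2^g`, by completing the square `b ↦ b + c`, since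
`⟨·,·⟩` is the polar form of `b ↦ b₁·b₂`. For even `a, a'` and `c = a + a'` one has
`c₁·c₂ = ⟨a,a'⟩`.
-/

open Matrix

lemma Matrix.isUnit_of_mul_self_eq_smul_one_add_smul {n K : Type*} [Fintype n] [DecidableEq n]
    [Field K] {A : Matrix n n K} {c d : K} (hc : c ≠ 0) (h : A * A = c • 1 + d • A) :
    IsUnit A := by
  have hinv : A * (c⁻¹ • (A - d • 1)) = 1 := by
    rw [Matrix.mul_smul, Matrix.mul_sub, h, Matrix.mul_smul, Matrix.mul_one, add_sub_cancel_right,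
      smul_smul, inv_mul_cancel₀ hc, one_smul]
  exact (Matrix.isUnit_iff_isUnit_det A).2 (Matrix.isUnit_det_of_right_inverse hinv)

lemma sgn_zero : sgn 0 = 1 := by simp [sgn]

lemma sgn_one : sgn 1 = -1 := by simp [sgn, ZMod.val_one]

lemma sgn_add (x y : ZMod 2) : sgn (x + y) = sgn x * sgn y := by
  rw [sgn, ZMod.val_add, ← neg_one_pow_eq_pow_mod_two, pow_add, sgn, sgn]

lemma sgn_eq_one_iff (x : ZMod 2) : sgn x = 1 ↔ x = 0 := by
  obtain rfl | rfl : x = 0 ∨ x = 1 := by revert x; decide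
  · simp [sgn_zero]
  · norm_num [sgn_one]

def sgnDotProductChar {ι : Type*} [Fintype ι] (v : ι → ZMod 2) : AddChar (ι → ZMod 2) ℚ where
  toFun x := sgn (v ⬝ᵥ x)
  map_zero_eq_one' := by simp [sgn_zero]
  map_add_eq_mul' x y := by simp [dotProduct_add, sgn_add]

lemma sum_sgn_dotProduct {ι : Type*} [Fintype ι] [DecidableEq ι] (v : ι → ZMod 2) :
    ∑ x, sgn (v ⬝ᵥ x) = if v = 0 then (2 : ℚ) ^ Fintype.card ι else 0 := by
  have hchar : sgnDotProductChar v = 0 ↔ v = 0 := by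
    refine ⟨fun h => funext fun i => ?_, fun h => by ext x; simp [sgnDotProductChar, h, sgn_zero]⟩
    have hi := (sgn_eq_one_iff _).1 (DFunLike.congr_fun h (Pi.single i 1))
    simpa [sgnDotProductChar] using hi
  have hsum := (sgnDotProductChar v).sum_eq_ite
  simp only [hchar, Fintype.card_fun, ZMod.card] at hsum
  simpa [sgnDotProductChar] using hsum

abbrev PairSpace (g : ℕ) : Type := (Fin g → ZMod 2) × (Fin g → ZMod 2)

section PairSpace

variable {g : ℕ}

lemma dot_eq_dotProduct (a b : Fin g → ZMod 2) : dot a b = a ⬝ᵥ b := rfl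

lemma pair_symm (a b : PairSpace g) : pair a b = pair b a := by
  simp only [pair, dot_eq_dotProduct, dotProduct_comm a.1, dotProduct_comm a.2, add_comm]

lemma pair_add_left (a a' b : PairSpace g) : pair (a + a') b = pair a b + pair a' b := by
  simp only [pair, dot_eq_dotProduct, Prod.fst_add, Prod.snd_add, add_dotProduct]
  abel

lemma dot_add_fst_snd (b c : PairSpace g) :
    dot (b + c).1 (b + c).2 = dot b.1 b.2 + dot c.1 c.2 + pair b c := by
  simp only [pair, dot_eq_dotProduct, Prod.fst_add, Prod.snd_add, add_dotProduct,
    dotProduct_add, dotProduct_comm c.1 b.2]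
  abel

lemma sum_sgn_pair (c : PairSpace g) :
    ∑ b : PairSpace g, sgn (pair c b) = if c = 0 then (4 : ℚ) ^ g else 0 := by
  simp only [pair, sgn_add, Fintype.sum_prod_type_right, dot_eq_dotProduct,
    ← Fintype.sum_mul_sum, sum_sgn_dotProduct, Fintype.card_fin, Prod.ext_iff, Prod.fst_zero,
    Prod.snd_zero]
  rw [ite_zero_mul_ite_zero, ← mul_pow]
  norm_num

lemma sum_sgn_dot : ∑ b : PairSpace g, sgn (dot b.1 b.2) = (2 : ℚ) ^ g := by
  simp [Fintype.sum_prod_type, dot_eq_dotProduct, sum_sgn_dotProduct]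

lemma sum_sgn_dot_add_pair (c : PairSpace g) :
    ∑ b : PairSpace g, sgn (dot b.1 b.2 + pair c b) = sgn (dot c.1 c.2) * (2 : ℚ) ^ g := by
  have hshift (b : PairSpace g) :
      sgn (dot b.1 b.2 + pair c b) = sgn (dot c.1 c.2) * sgn (dot (b + c).1 (b + c).2) := by
    rw [← sgn_add, dot_add_fst_snd, pair_symm]
    ring_nf
    reduce_mod_char
  simp_rw [hshift, ← Finset.mul_sum]
  rw [Fintype.sum_equiv (Equiv.addRight c) (fun b => sgn (dot (b + c).1 (b + c).2))
    (fun b => sgn (dot b.1 b.2)) fun _ => rfl, sum_sgn_dot]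

end PairSpace

section EvenPair

variable {g : ℕ}

lemma sum_evenPair {M : Type*} [AddCommMonoid M] (f : PairSpace g → M) :
    ∑ b : EvenPair g, f b.1 = ∑ b : PairSpace g, if dot b.1 b.2 = 0 then f b else 0 := by
  rw [← Finset.sum_filter]
  exact (Finset.sum_subtype _ (by simp) f).symm

lemma sum_evenPair_sgn_pair (c : PairSpace g) :
    ∑ b : EvenPair g, sgn (pair c b.1)
      = ((if c = 0 then (4 : ℚ) ^ g else 0) + sgn (dot c.1 c.2) * 2 ^ g) / 2 := by
  have hindicator (b : PairSpace g) : (if dot b.1 b.2 = 0 then sgn (pair c b) else 0)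
      = (sgn (pair c b) + sgn (dot b.1 b.2 + pair c b)) / 2 := by
    obtain h | h : dot b.1 b.2 = 0 ∨ dot b.1 b.2 = 1 := by
      generalize dot b.1 b.2 = x; revert x; decide
    · simp [h]
    · simp [h, sgn_add, sgn_one]
  refine (sum_evenPair fun b => sgn (pair c b)).trans ?_
  rw [Finset.sum_congr rfl fun b _ => hindicator b, ← Finset.sum_div,
    Finset.sum_add_distrib, sum_sgn_pair, sum_sgn_dot_add_pair]

lemma dot_add_of_evenPair (a a' : EvenPair g) :
    dot (a.1 + a'.1).1 (a.1 + a'.1).2 = pair a.1 a'.1 := by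
  rw [dot_add_fst_snd, a.2, a'.2, zero_add, zero_add]

lemma evenPair_add_eq_zero_iff (a a' : EvenPair g) : a.1 + a'.1 = 0 ↔ a = a' := by
  rw [add_eq_zero_iff_eq_neg, ZModModule.neg_eq_self]
  exact Subtype.val_inj

def evenPairSignMatrix (g : ℕ) : Matrix (EvenPair g) (EvenPair g) ℚ :=
  Matrix.of fun a b => sgn (pair a.1 b.1)

lemma evenPairSignMatrix_mul_self :
    evenPairSignMatrix g * evenPairSignMatrix g
      = ((4 : ℚ) ^ g / 2) • 1 + ((2 : ℚ) ^ g / 2) • evenPairSignMatrix g := by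
  ext a a'
  have hentry (b : EvenPair g) : sgn (pair a.1 b.1) * sgn (pair b.1 a'.1)
      = sgn (pair (a.1 + a'.1) b.1) := by
    rw [pair_symm b.1, ← sgn_add, pair_add_left]
  simp only [evenPairSignMatrix, Matrix.mul_apply, Matrix.of_apply, hentry,
    sum_evenPair_sgn_pair, dot_add_of_evenPair, evenPair_add_eq_zero_iff, Matrix.add_apply,
    Matrix.smul_apply, Matrix.one_apply, smul_eq_mul]
  split_ifs <;> ring

end EvenPair

theorem stmt_11_general (g : ℕ) :
    LinearIndependent ℚ
      (fun a : EvenPair g => fun b : EvenPair g => sgn (pair a.1 b.1)) :=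
  Matrix.linearIndependent_rows_of_isUnit
    (Matrix.isUnit_of_mul_self_eq_smul_one_add_smul (by positivity) evenPairSignMatrix_mul_self)

theorem stmt_11 (g : ℕ) (hg : 1 ≤ g) :
    LinearIndependent ℚ
      (fun a : EvenPair g => fun b : EvenPair g => sgn (pair a.1 b.1)) :=
  stmt_11_general g
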